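/- Let n' be a positive integer and k ≥ 2 an integer with gcd(k, n') = 1, and let g_1 be the smallest positive integer b with k^b ≡ 1 (mod n'). If g_1 ≥ 2 and q_1 is the smallest prime divisor of g_1, then υ_{k,n'} < 2 n'^{−1} k^{g_1/q_1}. -/

import Mathlib

/-- The order `g_x` of `x ∈ Z_{n'}`: the smallest positive integer `b` such that
`x k^b ≡ x (mod n')`. -/
noncomputable def ordOf (n' k : ℕ) (x : ZMod n') : ℕ :=
  sInf {b : ℕ | 0 < b ∧ x * (k : ZMod n') ^ b = x}

/-- `υ_{k,n'}`: the proportion of elements of `Z_{n'}` whose order is strictly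
less than `g_1`, the order of `1`. -/
noncomputable def upsilon (n' k : ℕ) : ℝ :=
  ({x : ZMod n' | ordOf n' k x < ordOf n' k 1}.ncard : ℝ) / n'

/-! If `x` has order `g_x < g₁`, then `g_x` is a proper divisor of `g₁` (because `x k^{g₁} = x`),
hence `g_x ≤ g₁ / q₁`, and `x` is killed by multiplication by `k^{g_x} - 1`. In the cyclic group
`Z_{n'}` that kernel has at most `k^{g_x} - 1` elements, and `∑_{d ≤ g₁/q₁} (k^d - 1) < 2 k^{g₁/q₁}`. -/

open Finset Function

theorem Nat.le_div_minFac_of_dvd_of_lt {n d : ℕ} (hd : d ∣ n) (hlt : d < n) :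
    d ≤ n / n.minFac := by
  obtain ⟨e, rfl⟩ := hd
  have he : 2 ≤ e := by
    by_contra! h
    interval_cases e <;> simp at hlt
  rw [Nat.le_div_iff_mul_le (Nat.minFac_pos _)]
  exact Nat.mul_le_mul_left d (Nat.minFac_le_of_dvd he (dvd_mul_left e d))

theorem Nat.sum_Icc_pow_sub_one_lt {k : ℕ} (hk : 2 ≤ k) (m : ℕ) :
    ∑ d ∈ Icc 1 m, (k ^ d - 1) < 2 * k ^ m := by
  induction m with
  | zero => simp
  | succ m ih =>
    rw [sum_Icc_succ_top (by omega)]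
    have : 2 * k ^ m ≤ k ^ (m + 1) := by rw [pow_succ']; gcongr
    have : 1 ≤ k ^ (m + 1) := Nat.one_le_pow _ _ (by omega)
    omega

theorem ZMod.card_mul_eq_self_le (n : ℕ) [NeZero n] {c : ℕ} (hc : 1 < c) :
    #{x : ZMod n | x * c = x} ≤ c - 1 := by
  have hiff : ∀ x : ZMod n, x * c = x ↔ (c - 1) • x = 0 := fun x => by
    rw [nsmul_eq_mul, Nat.cast_sub hc.le, mul_comm, sub_mul, sub_eq_zero, Nat.cast_one, one_mul]
  simp_rw [hiff]
  exact IsAddCyclic.card_nsmul_eq_zero_le (by omega)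

theorem isPeriodicPt_mul_right_iff {M : Type*} [Monoid M] {a x : M} {b : ℕ} :
    IsPeriodicPt (· * a) b x ↔ x * a ^ b = x := by
  rw [IsPeriodicPt, IsFixedPt, mul_right_iterate_apply]

-- Unconditional: `sInf ∅ = 0` matches the convention `minimalPeriod f x = 0` for non-periodic `x`.
theorem ordOf_eq_minimalPeriod (n k : ℕ) (x : ZMod n) :
    ordOf n k x = minimalPeriod (· * (k : ZMod n)) x := by
  have hset : {b : ℕ | 0 < b ∧ x * (k : ZMod n) ^ b = x} =
      {b | 0 < b ∧ IsPeriodicPt (· * (k : ZMod n)) b x} := by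
    simp only [isPeriodicPt_mul_right_iff]
  rw [ordOf, hset]
  by_cases h : x ∈ periodicPts (· * (k : ZMod n))
  · obtain ⟨hpos, hper⟩ := Nat.sInf_mem (s := {b | 0 < b ∧ IsPeriodicPt _ b x}) h
    exact le_antisymm (Nat.sInf_le ⟨minimalPeriod_pos_of_mem_periodicPts h,
      isPeriodicPt_minimalPeriod _ x⟩) (hper.minimalPeriod_le hpos)
  · rw [minimalPeriod_eq_zero_of_notMem_periodicPts h]
    exact Nat.sInf_eq_zero.mpr (Or.inr (Set.not_nonempty_iff_eq_empty.mp h))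

theorem mul_pow_ordOf (n k : ℕ) (x : ZMod n) : x * (k : ZMod n) ^ ordOf n k x = x := by
  rw [ordOf_eq_minimalPeriod, ← isPeriodicPt_mul_right_iff]
  exact isPeriodicPt_minimalPeriod _ x

section ordOf

variable {n k : ℕ} {x : ZMod n} {b : ℕ}

theorem ordOf_dvd_of_mul_pow_eq_self (h : x * (k : ZMod n) ^ b = x) : ordOf n k x ∣ b := by
  rw [ordOf_eq_minimalPeriod]
  exact (isPeriodicPt_mul_right_iff.mpr h).minimalPeriod_dvd

theorem ordOf_pos_of_mul_pow_eq_self (hb : 0 < b) (h : x * (k : ZMod n) ^ b = x) :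
    0 < ordOf n k x := by
  rw [ordOf_eq_minimalPeriod]
  exact (isPeriodicPt_mul_right_iff.mpr h).minimalPeriod_pos hb

end ordOf

theorem card_ordOf_lt_lt (n : ℕ) [NeZero n] {k g : ℕ} (hk : 2 ≤ k) (hg : 0 < g)
    (hkg : (k : ZMod n) ^ g = 1) :
    #{x : ZMod n | ordOf n k x < g} < 2 * k ^ (g / g.minFac) := by
  set m := g / g.minFac
  have hsub : ({x : ZMod n | ordOf n k x < g} : Finset (ZMod n)) ⊆
      (Icc 1 m).biUnion fun d => {x : ZMod n | x * ((k ^ d : ℕ) : ZMod n) = x} := by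
    intro x hx
    have hlt : ordOf n k x < g := (mem_filter.mp hx).2
    have hper : x * (k : ZMod n) ^ g = x := by rw [hkg, mul_one]
    refine mem_biUnion.mpr ⟨ordOf n k x, mem_Icc.mpr ⟨ordOf_pos_of_mul_pow_eq_self hg hper,
      Nat.le_div_minFac_of_dvd_of_lt (ordOf_dvd_of_mul_pow_eq_self hper) hlt⟩, ?_⟩
    simp [mul_pow_ordOf]
  calc #{x : ZMod n | ordOf n k x < g}
      ≤ ∑ d ∈ Icc 1 m, #{x : ZMod n | x * ((k ^ d : ℕ) : ZMod n) = x} :=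
        (card_le_card hsub).trans card_biUnion_le
    _ ≤ ∑ d ∈ Icc 1 m, (k ^ d - 1) := sum_le_sum fun d hd =>
        ZMod.card_mul_eq_self_le n (Nat.one_lt_pow (Nat.one_le_iff_ne_zero.mp (mem_Icc.mp hd).1) hk)
    _ < 2 * k ^ m := Nat.sum_Icc_pow_sub_one_lt hk m

theorem stmt11_general (n' k : ℕ) (hn' : 0 < n') (hk : 2 ≤ k)
    (g₁ : ℕ) (hg₁ : g₁ = ordOf n' k 1) (hg₁2 : 2 ≤ g₁) :
    upsilon n' k < 2 * (n' : ℝ)⁻¹ * (k : ℝ) ^ (g₁ / g₁.minFac) := by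
  have : NeZero n' := ⟨hn'.ne'⟩
  have hkg : (k : ZMod n') ^ g₁ = 1 := by simpa [hg₁] using mul_pow_ordOf n' k 1
  have hcard : (#{x : ZMod n' | ordOf n' k x < g₁} : ℝ) < 2 * (k : ℝ) ^ (g₁ / g₁.minFac) := by
    exact_mod_cast card_ordOf_lt_lt n' hk (by omega) hkg
  have hset : {x : ZMod n' | ordOf n' k x < ordOf n' k 1}.ncard =
      #{x : ZMod n' | ordOf n' k x < g₁} := by
    rw [← hg₁, ← Set.ncard_coe_finset, coe_filter]
    simp only [mem_univ, true_and]
  rw [upsilon, hset, div_eq_mul_inv, mul_right_comm]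
  exact mul_lt_mul_of_pos_right hcard (by positivity)

/-- If `g_1 ≥ 2` and `q_1` is the smallest prime divisor of `g_1`, then
`υ_{k,n'} < 2 n'⁻¹ k^{g_1/q_1}`. -/
theorem stmt11 (n' k : ℕ) (hn' : 0 < n') (hk : 2 ≤ k) (hcop : Nat.Coprime k n')
    (g₁ : ℕ) (hg₁ : g₁ = ordOf n' k 1) (hg₁2 : 2 ≤ g₁) :
    upsilon n' k < 2 * (n' : ℝ)⁻¹ * (k : ℝ) ^ (g₁ / g₁.minFac) :=
  stmt11_general n' k hn' hk g₁ hg₁ hg₁2
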